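/- In a metric space (M, Δ), let points x_1, ..., x_{2c} and ρ be such that at least c+1 of the x_i satisfy Δ(x_i, ρ) ≤ ε. Let x_{i*} maximize over i the cardinality of {j : Δ(x_i, x_j) ≤ 2ε}. Then Δ(x_{i*}, ρ) ≤ 3ε. -/
import Mathlib


/-- Deterministic core of the amplification lemma: in a metric space, if at least `c+1` of the
points `x_1, ..., x_{2c}` are within distance `ε` of `ρ`, then any point `x_{i*}` maximizing the
number of points within distance `2ε` of it is within distance `3ε` of `ρ`. -/
theorem median_selection {M : Type*} [MetricSpace M] (c : ℕ) (ε : ℝ)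
    (x : Fin (2 * c) → M) (ρ : M) (istar : Fin (2 * c))
    (hS : ∃ S : Finset (Fin (2 * c)), c + 1 ≤ S.card ∧ ∀ i ∈ S, dist (x i) ρ ≤ ε)
    (hmax : ∀ i, (Finset.univ.filter fun j => dist (x i) (x j) ≤ 2 * ε).card
      ≤ (Finset.univ.filter fun j => dist (x istar) (x j) ≤ 2 * ε).card) :
    dist (x istar) ρ ≤ 3 * ε := by
  obtain ⟨S, hcard, hclose⟩ := hS
  by_contra hfar
  push_neg at hfar
  -- pick some i ∈ S
  obtain ⟨i, hi⟩ := Finset.card_pos.mp (by omega : 0 < S.card)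
  -- S ⊆ filter for i
  have h1 : S ⊆ Finset.univ.filter fun j => dist (x i) (x j) ≤ 2 * ε := by
    intro j hj
    simp only [Finset.mem_filter, Finset.mem_univ, true_and]
    calc dist (x i) (x j) ≤ dist (x i) ρ + dist ρ (x j) := dist_triangle _ _ _
      _ ≤ ε + ε := by
          have := hclose i hi
          have := hclose j hj
          rw [dist_comm] at this
          linarith
      _ = 2 * ε := by ring
  -- filter for istar ⊆ Sᶜ
  have h2 : (Finset.univ.filter fun j => dist (x istar) (x j) ≤ 2 * ε) ⊆ Sᶜ := by
    intro j hj
    simp only [Finset.mem_filter, Finset.mem_univ, true_and] at hj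
    simp only [Finset.mem_compl]
    intro hjS
    have h3 := hclose j hjS
    have : dist (x istar) ρ ≤ dist (x istar) (x j) + dist (x j) ρ := dist_triangle _ _ _
    linarith
  have hc1 : c + 1 ≤ (Finset.univ.filter fun j => dist (x i) (x j) ≤ 2 * ε).card :=
    le_trans hcard (Finset.card_le_card h1)
  have hc2 : (Finset.univ.filter fun j => dist (x istar) (x j) ≤ 2 * ε).card ≤ Sᶜ.card :=
    Finset.card_le_card h2
  have hcc : Sᶜ.card = 2 * c - S.card := by
    rw [Finset.card_compl, Fintype.card_fin]
  have := hmax i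
  omega
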